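/- Let T be the rooted tree consisting of all finite sequences of the form 0ⁿ1ᵐ (n zeros followed by m ones, n, m ∈ ℕ), with root the empty sequence and equipped with the tree metric. Then σ(T, root), the set of σ-equivalence classes of coarse sequences in (T, root), is countably infinite (it has cardinality ℵ₀). -/

import Mathlib

open Filter

/-- The length of the longest common prefix of two lists. -/
def commonPrefixLen : List ℕ → List ℕ → ℕ
  | a :: s, b :: t => if a = b then commonPrefixLen s t + 1 else 0
  | _, _ => 0

/-- The tree metric on finite sequences: `d(s,t) = |s| + |t| - 2ℓ` where `ℓ` is the
length of the longest common prefix of `s` and `t`. -/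
def treeDist (s t : List ℕ) : ℕ :=
  s.length + t.length - 2 * commonPrefixLen s t

/-- A rooted tree: a set of finite sequences containing the empty sequence and
closed under prefixes. -/
def IsTree (T : Set (List ℕ)) : Prop :=
  [] ∈ T ∧ ∀ l ∈ T, ∀ l' : List ℕ, l' <+: l → l' ∈ T

/-- A tree is finitely branching if every node has only finitely many one-step
extensions in the tree. -/
def FinitelyBranching (T : Set (List ℕ)) : Prop :=
  ∀ l ∈ T, {n : ℕ | l ++ [n] ∈ T}.Finite

/-- `[T]`: the set of infinite branches of `T`. -/
def Branch (T : Set (List ℕ)) :=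
  {f : ℕ → ℕ // ∀ n : ℕ, (List.ofFn fun i : Fin n => f i.1) ∈ T}

/-- A coarse sequence in the pointed metric space `(T, root)`: a sequence of nodes of
`T` with uniformly bounded consecutive steps that diverges from the root to infinity. -/
def IsCoarseSeqT (T : Set (List ℕ)) (s : ℕ → List ℕ) : Prop :=
  (∀ i : ℕ, s i ∈ T) ∧
  (∃ K : ℝ, ∀ i : ℕ, (treeDist (s i) (s (i + 1)) : ℝ) ≤ K) ∧
  Tendsto (fun i => treeDist [] (s i)) atTop atTop

/-- `s` is a subsequence of `t`. -/
def IsSubseq {X : Type*} (s t : ℕ → X) : Prop :=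
  ∃ k : ℕ → ℕ, StrictMono k ∧ ∀ i, s i = t (k i)

/-- σ-equivalence of coarse sequences in `(T, root)`. -/
def SigmaRelT (T : Set (List ℕ)) (s t : ℕ → List ℕ) : Prop :=
  ∃ (n : ℕ) (u : ℕ → ℕ → List ℕ), u 0 = s ∧ u n = t ∧ (∀ i ≤ n, IsCoarseSeqT T (u i)) ∧
    ∀ i < n, IsSubseq (u i) (u (i + 1)) ∨ IsSubseq (u (i + 1)) (u i)

/-- `x` and `y` are connected inside `A` by a finite chain with steps of tree
distance `≤ K`. -/
def ChainT (K : ℝ) (A : Set (List ℕ)) (x y : List ℕ) : Prop :=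
  ∃ (n : ℕ) (c : ℕ → List ℕ), c 0 = x ∧ c n = y ∧ (∀ i ≤ n, c i ∈ A) ∧
    ∀ i < n, (treeDist (c i) (c (i + 1)) : ℝ) ≤ K

/-- ε-equivalence of coarse sequences in `(T, root)`: there is `K > 0` such that for
every `r > 0` there is `N` with the tails of `s` and `t` lying in the same
`K`-connected component of `T \ {x : d(root, x) ≤ r}`. -/
def EpsRelT (T : Set (List ℕ)) (s t : ℕ → List ℕ) : Prop :=
  ∃ K > (0 : ℝ), ∀ r > (0 : ℝ), ∃ N : ℕ,
    ∀ x ∈ (s '' {i | N ≤ i}) ∪ (t '' {i | N ≤ i}),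
    ∀ y ∈ (s '' {i | N ≤ i}) ∪ (t '' {i | N ≤ i}),
      ChainT K {l : List ℕ | l ∈ T ∧ r < (treeDist [] l : ℝ)} x y

/-- The set of coarse sequences in `(T, root)`. -/
def CoarseSeqT (T : Set (List ℕ)) := {s : ℕ → List ℕ // IsCoarseSeqT T s}

/-- `σ(T, root)`: the quotient of the set of coarse sequences by σ-equivalence. -/
def SigmaQuotT (T : Set (List ℕ)) :=
  Quot (fun s t : CoarseSeqT T => SigmaRelT T s.1 t.1)

/-- `ε(T, root)`: the quotient of the set of coarse sequences by ε-equivalence. -/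
def EpsQuotT (T : Set (List ℕ)) :=
  Quot (fun s t : CoarseSeqT T => EpsRelT T s.1 t.1)

/-!
A coarse sequence with steps of length at most `K` can pass from the tooth over `0ⁿ` to another
tooth only within distance `K` of `0ⁿ`. As it escapes to infinity, it either eventually stays on
one tooth or its tooth index tends to infinity. Along its record times (of the height on the tooth,
resp. of the tooth index) it has a coarse subsequence which is a subsequence of that tooth, resp.
stays within bounded distance of a subsequence of the spine; so there are at most countably many
classes. Conversely, eventually staying on tooth `n` passes to coarse supersequences and to
subsequences, hence is an invariant of σ-equivalence, and distinct teeth give distinct classes.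
-/

lemma exists_record_times {f : ℕ → ℕ} (hf : Tendsto f atTop atTop) (N : ℕ) :
    ∃ k : ℕ → ℕ, k 0 = N ∧ StrictMono k ∧
      ∀ j, f (k j) < f (k (j + 1)) ∧ f (k (j + 1) - 1) ≤ f (k j) := by
  have hnext (m : ℕ) : ∃ i, m < i ∧ f m < f i ∧ ∀ i', m < i' → i' < i → f i' ≤ f m := by
    have hex : ∃ i, m < i ∧ f m < f i :=
      ((eventually_gt_atTop m).and (hf.eventually_gt_atTop (f m))).exists
    refine ⟨Nat.find hex, (Nat.find_spec hex).1, (Nat.find_spec hex).2, fun i' hm hi' => ?_⟩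
    exact not_lt.1 fun hlt => Nat.find_min hex hi' ⟨hm, hlt⟩
  choose g hg_gt hg_rec hg_min using hnext
  have hk (j : ℕ) : g^[j + 1] N = g (g^[j] N) := Function.iterate_succ_apply' g j N
  refine ⟨fun j => g^[j] N, rfl, strictMono_nat_of_lt_succ fun j => ?_, fun j => ⟨?_, ?_⟩⟩
  · rw [hk]; exact hg_gt _
  · dsimp only; rw [hk]; exact hg_rec _
  · dsimp only; rw [hk]
    rcases (Nat.le_sub_one_of_lt (hg_gt (g^[j] N))).eq_or_lt with heq | hlt
    · rw [← heq]
    · exact hg_min _ _ hlt (Nat.sub_one_lt_of_lt (hg_gt _))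

lemma commonPrefixLen_nil_left (t : List ℕ) : commonPrefixLen [] t = 0 := by
  cases t <;> rfl

lemma commonPrefixLen_comm (s t : List ℕ) : commonPrefixLen s t = commonPrefixLen t s := by
  induction s generalizing t with
  | nil => cases t <;> rfl
  | cons x s ih =>
    cases t with
    | nil => rfl
    | cons y t => simp only [commonPrefixLen, ih, eq_comm]

lemma commonPrefixLen_append_left (u s t : List ℕ) :
    commonPrefixLen (u ++ s) (u ++ t) = u.length + commonPrefixLen s t := by
  induction u with
  | nil => simp
  | cons x u ih =>
    simp only [List.cons_append, commonPrefixLen, if_true, ih, List.length_cons]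
    omega

lemma treeDist_comm (s t : List ℕ) : treeDist s t = treeDist t s := by
  rw [treeDist, treeDist, commonPrefixLen_comm, Nat.add_comm s.length]

lemma treeDist_nil_left (l : List ℕ) : treeDist [] l = l.length := by
  simp [treeDist, commonPrefixLen_nil_left]

section CoarseSeq

variable {T : Set (List ℕ)}

lemma isCoarseSeqT_iff {s : ℕ → List ℕ} :
    IsCoarseSeqT T s ↔ (∀ i, s i ∈ T) ∧ (∃ K : ℕ, ∀ i, treeDist (s i) (s (i + 1)) ≤ K) ∧
      Tendsto (fun i => (s i).length) atTop atTop := by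
  simp only [IsCoarseSeqT, treeDist_nil_left]
  refine and_congr_right fun _ => and_congr_left fun _ => ⟨fun ⟨K, hK⟩ => ⟨⌈K⌉₊, fun i => ?_⟩,
    fun ⟨K, hK⟩ => ⟨K, fun i => by exact_mod_cast hK i⟩⟩
  exact_mod_cast (hK i).trans (Nat.le_ceil K)

lemma IsCoarseSeqT.comp {s : ℕ → List ℕ} (hs : IsCoarseSeqT T s) {k : ℕ → ℕ} (hk : StrictMono k)
    {K : ℕ} (hK : ∀ j, treeDist (s (k j)) (s (k (j + 1))) ≤ K) : IsCoarseSeqT T (s ∘ k) := by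
  obtain ⟨hmem, -, hlen⟩ := isCoarseSeqT_iff.1 hs
  exact isCoarseSeqT_iff.2 ⟨fun j => hmem (k j), ⟨K, hK⟩, hlen.comp hk.tendsto_atTop⟩

def sigmaClass (s : ℕ → List ℕ) (hs : IsCoarseSeqT T s) : SigmaQuotT T :=
  Quot.mk _ ⟨s, hs⟩

lemma sigmaRelT_of_isSubseq {s t : ℕ → List ℕ} (hs : IsCoarseSeqT T s) (ht : IsCoarseSeqT T t)
    (h : IsSubseq s t) : SigmaRelT T s t := by
  refine ⟨1, fun i => if i = 0 then s else t, rfl, rfl, fun i hi => ?_, fun i hi => ?_⟩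
  · rcases Nat.le_one_iff_eq_zero_or_eq_one.1 hi with rfl | rfl <;> simpa
  · obtain rfl : i = 0 := by omega
    simpa using Or.inl h

lemma sigmaClass_eq_of_isSubseq {s t : ℕ → List ℕ} (hs : IsCoarseSeqT T s)
    (ht : IsCoarseSeqT T t) (h : IsSubseq s t) : sigmaClass s hs = sigmaClass t ht :=
  Quot.sound (sigmaRelT_of_isSubseq hs ht h)

def interleave {α : Type*} (s t : ℕ → α) (i : ℕ) : α :=
  if i % 2 = 0 then s (i / 2) else t (i / 2)

lemma interleave_two_mul {α : Type*} (s t : ℕ → α) (k : ℕ) : interleave s t (2 * k) = s k := by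
  simp [interleave]

lemma interleave_two_mul_add_one {α : Type*} (s t : ℕ → α) (k : ℕ) :
    interleave s t (2 * k + 1) = t k := by
  simp [interleave, show (2 * k + 1) / 2 = k by omega]

lemma sigmaClass_eq_of_treeDist_le {s t : ℕ → List ℕ} (hs : IsCoarseSeqT T s)
    (ht : IsCoarseSeqT T t) {D : ℕ} (hst : ∀ k, treeDist (s k) (t k) ≤ D)
    (hts : ∀ k, treeDist (t k) (s (k + 1)) ≤ D) : sigmaClass s hs = sigmaClass t ht := by
  obtain ⟨hsT, -, hsLen⟩ := isCoarseSeqT_iff.1 hs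
  obtain ⟨htT, -, htLen⟩ := isCoarseSeqT_iff.1 ht
  have hw : IsCoarseSeqT T (interleave s t) := by
    refine isCoarseSeqT_iff.2 ⟨fun i => ?_, ⟨D, fun i => ?_⟩, tendsto_atTop.2 fun R => ?_⟩
    · unfold interleave; split_ifs <;> simp only [hsT, htT]
    · obtain ⟨k, rfl | rfl⟩ := Nat.even_or_odd' i
      · simpa only [interleave_two_mul, interleave_two_mul_add_one] using hst k
      · simpa only [show 2 * k + 1 + 1 = 2 * (k + 1) by ring, interleave_two_mul,
          interleave_two_mul_add_one] using hts k
    · obtain ⟨N, hN⟩ := eventually_atTop.1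
        ((tendsto_atTop.1 hsLen R).and (tendsto_atTop.1 htLen R))
      refine eventually_atTop.2 ⟨2 * N, fun i hi => ?_⟩
      have := hN (i / 2) (by omega)
      unfold interleave; split_ifs <;> simp only [this]
  exact (sigmaClass_eq_of_isSubseq hs hw ⟨(2 * ·), strictMono_mul_left_of_pos two_pos,
    fun k => (interleave_two_mul s t k).symm⟩).trans
    (sigmaClass_eq_of_isSubseq ht hw ⟨(2 * · + 1), fun _ _ h => by dsimp; omega,
    fun k => (interleave_two_mul_add_one s t k).symm⟩).symm

end CoarseSeq

/-- The node at height `b` on the tooth attached to the spine at `0ᵃ`. -/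
def combNode (a b : ℕ) : List ℕ := List.replicate a 0 ++ List.replicate b 1

def comb : Set (List ℕ) := {l | ∃ n m : ℕ, l = combNode n m}

lemma combNode_mem_comb (a b : ℕ) : combNode a b ∈ comb := ⟨a, b, rfl⟩

@[simp] lemma length_combNode (a b : ℕ) : (combNode a b).length = a + b := by
  simp [combNode]

@[simp] lemma count_zero_combNode (a b : ℕ) : (combNode a b).count 0 = a := by
  simp [combNode, List.count_replicate]

@[simp] lemma count_one_combNode (a b : ℕ) : (combNode a b).count 1 = b := by
  simp [combNode, List.count_replicate]

lemma eq_combNode_count {l : List ℕ} (hl : l ∈ comb) : l = combNode (l.count 0) (l.count 1) := by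
  obtain ⟨a, b, rfl⟩ := hl
  simp

lemma commonPrefixLen_replicate_one (b b' : ℕ) :
    commonPrefixLen (List.replicate b 1) (List.replicate b' 1) = min b b' := by
  induction b generalizing b' with
  | zero => exact commonPrefixLen_nil_left _
  | succ b ih =>
    cases b' with
    | zero => rfl
    | succ b' => simp [List.replicate_succ, commonPrefixLen, ih]

lemma treeDist_combNode_same_tooth (a b b' : ℕ) :
    treeDist (combNode a b) (combNode a b') = (b - b') + (b' - b) := by
  simp only [treeDist, combNode, commonPrefixLen_append_left, commonPrefixLen_replicate_one,
    List.length_append, List.length_replicate]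
  omega

lemma treeDist_combNode_of_lt {a a' : ℕ} (h : a < a') (b b' : ℕ) :
    treeDist (combNode a b) (combNode a' b') = b + b' + (a' - a) := by
  have hsplit : combNode a' b' = List.replicate a 0 ++ 0 :: combNode (a' - a - 1) b' := by
    rw [combNode, combNode, ← List.cons_append, ← List.replicate_succ, ← List.append_assoc,
      ← List.replicate_add]
    congr 2
    omega
  have hcpl : commonPrefixLen (combNode a b) (combNode a' b') = a := by
    rw [hsplit, combNode, commonPrefixLen_append_left]
    cases b <;> simp [List.replicate_succ, commonPrefixLen]
  rw [treeDist, hcpl, length_combNode, length_combNode]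
  omega

lemma treeDist_combNode_of_ne {a a' : ℕ} (h : a ≠ a') (b b' : ℕ) :
    treeDist (combNode a b) (combNode a' b') = b + b' + ((a - a') + (a' - a)) := by
  rcases h.lt_or_gt with h | h
  · rw [treeDist_combNode_of_lt h]; omega
  · rw [treeDist_comm, treeDist_combNode_of_lt h]; omega

def OnTooth (n : ℕ) (s : ℕ → List ℕ) : Prop :=
  ∀ᶠ i in atTop, s i ∈ Set.range (combNode n)

lemma eq_of_treeDist_combNode_le {n c a b K : ℕ}
    (h : treeDist (combNode n c) (combNode a b) ≤ K) (hc : K < c) : a = n := by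
  by_contra hne
  rw [treeDist_combNode_of_ne (Ne.symm hne)] at h
  omega

/-- The height on the tooth stays above `K`, so no step can reach another tooth. -/
lemma onTooth_of_deep {s : ℕ → List ℕ} {n K M i₀ : ℕ} (hmem : ∀ i, s i ∈ comb)
    (hK : ∀ i, treeDist (s i) (s (i + 1)) ≤ K) (hdeep : ∀ i ≥ M, n + K < (s i).length)
    (hi₀ : M ≤ i₀) (h₀ : s i₀ ∈ Set.range (combNode n)) : OnTooth n s := by
  refine eventually_atTop.2 ⟨i₀, fun i hi => ?_⟩
  induction i, hi using Nat.le_induction with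
  | base => exact h₀
  | succ i hi ih =>
    obtain ⟨c, hc⟩ := ih
    have hcK : K < c := by
      have := hdeep i (by omega); rw [← hc, length_combNode] at this; omega
    have hstep := hK i
    rw [← hc, eq_combNode_count (hmem (i + 1))] at hstep
    rw [eq_combNode_count (hmem (i + 1)), eq_of_treeDist_combNode_le hstep hcK]
    exact Set.mem_range_self _

lemma IsCoarseSeqT.onTooth_of_isSubseq {s t : ℕ → List ℕ} (ht : IsCoarseSeqT comb t)
    (hst : IsSubseq s t) {n : ℕ} (hs : OnTooth n s) : OnTooth n t := by
  obtain ⟨hmem, ⟨K, hK⟩, hlen⟩ := isCoarseSeqT_iff.1 ht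
  obtain ⟨k, hk, rfl⟩ : ∃ k, StrictMono k ∧ s = t ∘ k := by
    obtain ⟨k, hk, h⟩ := hst; exact ⟨k, hk, funext h⟩
  obtain ⟨M, hM⟩ := eventually_atTop.1 (tendsto_atTop.1 hlen (n + K + 1))
  obtain ⟨i, hiM, hi⟩ := ((eventually_ge_atTop M).and hs).exists
  exact onTooth_of_deep hmem hK (fun j hj => hM j hj) (hiM.trans hk.le_apply) hi

lemma OnTooth.of_isSubseq {s t : ℕ → List ℕ} {n : ℕ} (ht : OnTooth n t) (hst : IsSubseq s t) :
    OnTooth n s := by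
  obtain ⟨k, hk, h⟩ := hst
  simpa only [OnTooth, h] using hk.tendsto_atTop.eventually ht

lemma onTooth_iff_of_sigmaRelT {s t : ℕ → List ℕ} (h : SigmaRelT comb s t) {n : ℕ} :
    OnTooth n s ↔ OnTooth n t := by
  obtain ⟨m, u, rfl, rfl, hcoarse, hlink⟩ := h
  suffices ∀ i ≤ m, (OnTooth n (u 0) ↔ OnTooth n (u i)) from this m le_rfl
  intro i hi
  induction i with
  | zero => rfl
  | succ i ih =>
    refine (ih (by omega)).trans ?_
    rcases hlink i (by omega) with h | h
    · exact ⟨(hcoarse (i + 1) hi).onTooth_of_isSubseq h, (·.of_isSubseq h)⟩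
    · exact ⟨(·.of_isSubseq h), (hcoarse i (by omega)).onTooth_of_isSubseq h⟩

def onToothClass (n : ℕ) : SigmaQuotT comb → Prop :=
  Quot.lift (fun s => OnTooth n s.1) fun _ _ h => propext (onTooth_iff_of_sigmaRelT h)

lemma isCoarseSeqT_tooth (n : ℕ) : IsCoarseSeqT comb (combNode n) := by
  refine isCoarseSeqT_iff.2 ⟨combNode_mem_comb n, ⟨1, fun i => ?_⟩, ?_⟩
  · rw [treeDist_combNode_same_tooth]; omega
  · simpa [Nat.add_comm] using tendsto_add_atTop_nat n

lemma isCoarseSeqT_spine : IsCoarseSeqT comb (combNode · 0) := by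
  refine isCoarseSeqT_iff.2 ⟨(combNode_mem_comb · 0), ⟨1, fun i => ?_⟩, ?_⟩
  · rw [treeDist_combNode_of_ne (by omega)]; omega
  · simp only [length_combNode, add_zero]; exact tendsto_id

def toothClass (n : ℕ) : SigmaQuotT comb := sigmaClass _ (isCoarseSeqT_tooth n)

def spineClass : SigmaQuotT comb := sigmaClass _ isCoarseSeqT_spine

lemma toothClass_injective : Function.Injective toothClass := by
  intro n m h
  have hm : OnTooth n (combNode m) := by
    have := congrArg (onToothClass n) h
    exact cast this (Eventually.of_forall fun b => Set.mem_range_self b)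
  obtain ⟨b, c, hc⟩ := hm.exists
  simpa using congrArg (List.count 0) hc

lemma sigmaClass_eq_toothClass {s : ℕ → List ℕ} (hs : IsCoarseSeqT comb s) {n : ℕ}
    (hn : OnTooth n s) : sigmaClass s hs = toothClass n := by
  obtain ⟨hmem, ⟨K, hK⟩, hlen⟩ := isCoarseSeqT_iff.1 hs
  choose a b hab using hmem
  obtain ⟨N, hN⟩ : ∃ N, ∀ i ≥ N, s i = combNode n (b i) := by
    obtain ⟨N, hN⟩ := eventually_atTop.1 hn
    refine ⟨N, fun i hi => ?_⟩
    obtain ⟨c, hc⟩ := hN i hi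
    have := congrArg (List.count 0) (hc.trans (hab i))
    simp only [count_zero_combNode] at this
    rw [hab i, this]
  have hb : Tendsto b atTop atTop :=
    ((tendsto_sub_atTop_nat n).comp hlen).congr'
      (eventually_atTop.2 ⟨N, fun i hi => by simp [hN i hi]⟩)
  obtain ⟨k, rfl, hk, hrec⟩ := exists_record_times hb N
  have hsk (j : ℕ) : s (k j) = combNode n (b (k j)) := hN _ (hk.monotone (Nat.zero_le j))
  have hgap (j : ℕ) : b (k (j + 1)) ≤ b (k j) + K := by
    have hstep := hK (k (j + 1) - 1)
    have hle : k 0 ≤ k (j + 1) - 1 :=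
      (hk.monotone (Nat.zero_le j)).trans (Nat.le_sub_one_of_lt (hk (Nat.lt_add_one j)))
    rw [Nat.sub_add_cancel (Nat.one_le_of_lt (hk (Nat.lt_add_one j))), hN _ hle,
      hsk, treeDist_combNode_same_tooth] at hstep
    have := hrec j
    omega
  have hs' : IsCoarseSeqT comb (s ∘ k) := hs.comp hk (K := K) fun j => by
    rw [hsk, hsk, treeDist_combNode_same_tooth]
    have := hgap j
    have := hrec j
    omega
  calc sigmaClass s hs = sigmaClass (s ∘ k) hs' :=
        (sigmaClass_eq_of_isSubseq hs' hs ⟨k, hk, fun _ => rfl⟩).symm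
    _ = toothClass n := sigmaClass_eq_of_isSubseq hs' (isCoarseSeqT_tooth n)
        ⟨b ∘ k, strictMono_nat_of_lt_succ fun j => (hrec j).1, hsk⟩

lemma tendsto_count_zero_of_forall_not_onTooth {s : ℕ → List ℕ} (hs : IsCoarseSeqT comb s)
    (h : ∀ n, ¬OnTooth n s) : Tendsto (fun i => (s i).count 0) atTop atTop := by
  obtain ⟨hmem, ⟨K, hK⟩, hlen⟩ := isCoarseSeqT_iff.1 hs
  refine tendsto_atTop.2 fun R => ?_
  obtain ⟨M, hM⟩ := eventually_atTop.1 (tendsto_atTop.1 hlen (R + K + 1))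
  refine eventually_atTop.2 ⟨M, fun i hi => ?_⟩
  by_contra! hlt
  refine h _ (onTooth_of_deep hmem hK (fun j hj => ?_) hi ⟨_, (eq_combNode_count (hmem i)).symm⟩)
  have := hM j hj
  omega

lemma sigmaClass_eq_spineClass_of_height_le {s : ℕ → List ℕ} (hs : IsCoarseSeqT comb s)
    {a b : ℕ → ℕ} (hab : ∀ j, s j = combNode (a j) (b j)) {K : ℕ} (hb : ∀ j, b j ≤ K)
    (ha : ∀ j, a j < a (j + 1) ∧ a (j + 1) ≤ a j + K) : sigmaClass s hs = spineClass := by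
  have ha_mono : StrictMono a := strictMono_nat_of_lt_succ fun j => (ha j).1
  have hu : IsCoarseSeqT comb ((combNode · 0) ∘ a) :=
    isCoarseSeqT_spine.comp ha_mono (K := K) fun j => by
      rw [treeDist_combNode_of_ne (ha j).1.ne]
      have := ha j
      omega
  calc sigmaClass s hs = sigmaClass _ hu := by
        refine sigmaClass_eq_of_treeDist_le hs hu (D := 2 * K) (fun j => ?_) (fun j => ?_)
        · rw [hab, Function.comp_apply, treeDist_combNode_same_tooth]
          have := hb j
          omega
        · rw [hab, Function.comp_apply, treeDist_combNode_of_ne (ha j).1.ne]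
          have := ha j
          have := hb (j + 1)
          omega
    _ = spineClass := sigmaClass_eq_of_isSubseq hu isCoarseSeqT_spine ⟨a, ha_mono, fun _ => rfl⟩

lemma sigmaClass_eq_spineClass {s : ℕ → List ℕ} (hs : IsCoarseSeqT comb s)
    (h : ∀ n, ¬OnTooth n s) : sigmaClass s hs = spineClass := by
  obtain ⟨hmem, ⟨K, hK⟩, -⟩ := isCoarseSeqT_iff.1 hs
  choose a b hab using hmem
  have ha : Tendsto a atTop atTop :=
    (tendsto_count_zero_of_forall_not_onTooth hs h).congr fun i => by simp [hab i]
  obtain ⟨k, -, hk, hrec⟩ := exists_record_times ha 0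
  -- At a record time the tooth index has just changed, which happens only within `K` of the spine.
  have hjump (j : ℕ) : b (k (j + 1)) ≤ K ∧ a (k (j + 1)) ≤ a (k j) + K := by
    have hstep := hK (k (j + 1) - 1)
    have := hrec j
    rw [Nat.sub_add_cancel (Nat.one_le_of_lt (hk (Nat.lt_add_one j))), hab, hab,
      treeDist_combNode_of_ne (by omega)] at hstep
    omega
  have hk' : StrictMono (k ∘ (· + 1)) := hk.comp fun _ _ h => Nat.add_lt_add_right h 1
  have hs' : IsCoarseSeqT comb (s ∘ k ∘ (· + 1)) := hs.comp hk' (K := 3 * K) fun j => by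
    have := hrec (j + 1)
    have := hjump j
    have := hjump (j + 1)
    simp only [Function.comp_apply] at *
    rw [hab, hab, treeDist_combNode_of_ne (by omega)]
    omega
  calc sigmaClass s hs = sigmaClass _ hs' :=
        (sigmaClass_eq_of_isSubseq hs' hs ⟨_, hk', fun _ => rfl⟩).symm
    _ = spineClass := sigmaClass_eq_spineClass_of_height_le hs' (fun j => hab (k (j + 1)))
        (fun j => (hjump j).1) fun j => ⟨(hrec (j + 1)).1, (hjump (j + 1)).2⟩

lemma sigmaQuotT_comb_eq_spineClass_or_toothClass (x : SigmaQuotT comb) :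
    x = spineClass ∨ ∃ n, x = toothClass n := by
  induction x using Quot.ind with
  | mk s =>
    by_cases h : ∃ n, OnTooth n s.1
    · obtain ⟨n, hn⟩ := h
      exact Or.inr ⟨n, sigmaClass_eq_toothClass s.2 hn⟩
    · exact Or.inl (sigmaClass_eq_spineClass s.2 (not_exists.1 h))

/-- for the tree `T = {0ⁿ1ᵐ : n, m ∈ ℕ}`, the set `σ(T, root)` is
countably infinite, i.e. it has cardinality `ℵ₀`. -/
theorem sigmaQuot_comb_tree_aleph0 :
    Cardinal.mk (SigmaQuotT
      {l : List ℕ | ∃ n m : ℕ, l = List.replicate n 0 ++ List.replicate m 1}) =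
      Cardinal.aleph0 := by
  have : Countable (SigmaQuotT comb) := by
    refine Function.Surjective.countable (f := fun o : Option ℕ => o.elim spineClass toothClass)
      fun x => ?_
    rcases sigmaQuotT_comb_eq_spineClass_or_toothClass x with rfl | ⟨n, rfl⟩
    exacts [⟨none, rfl⟩, ⟨some n, rfl⟩]
  have : Infinite (SigmaQuotT comb) := Infinite.of_injective _ toothClass_injective
  exact Cardinal.mk_eq_aleph0 (SigmaQuotT comb)
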